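/- Let ψ ∈ ℂ⁸ be a unit vector describing a pure state of three qubits X, Y, Z, with reduced density matrices ρ_XY, ρ_XZ, and ρ_X defined by partial traces as (ρ_XY)_{(i,j),(i',j')} = Σ_k ψ_{ijk} ψ*_{i'j'k}, (ρ_XZ)_{(i,k),(i',k')} = Σ_j ψ_{ijk} ψ*_{i'jk'}, (ρ_X)_{i,i'} = Σ_{j,k} ψ_{ijk} ψ*_{i'jk}. If H(ρ_XY) = 1 then H(ρ_XZ) = 0, and if H(ρ_XZ) = 1 then H(ρ_XY) = 0, where H is the harmony of a 2-qubit density matrix. -/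

import Mathlib

/-!
Write `ρ_XY = C Cᴴ` with `C` the `4 × 2` matrix `C_{(i,j),k} = ψ_{ijk}`. Then `ρ̃_XY = D Dᴴ` with
`D = (σy ⊗ σy) C*`, `det ρ_XY = 0` because `ρ_XY` has rank at most two, and cycling the trace
turns `tr(ρρ̃)` and `tr((ρρ̃)²)` into `tr M` and `tr M²` for `M = K Kᴴ`, `K = Cᴴ D` a `2 × 2`
matrix. Since `tr M² = (tr M)² - 2 det M` in dimension two, `H(ρ_XY) = (tr K Kᴴ)² - 4 |det K|²`.
A direct computation gives `tr K_XY K_XYᴴ + tr K_XZ K_XZᴴ = 4 det ρ_X`, and `4 det ρ_X ≤ (tr ρ_X)² = 1`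
for the Hermitian `ρ_X`; hence `H(ρ_XY) + H(ρ_XZ) ≤ (4 det ρ_X)² ≤ 1`, and as both harmonies are
nonnegative, one of them equal to `1` forces the other to vanish.
-/

open Matrix Kronecker Complex ComplexOrder

/-- The Pauli matrix `σy`. -/
noncomputable def pauliY : Matrix (Fin 2) (Fin 2) ℂ := !![0, -Complex.I; Complex.I, 0]

/-- The spin-flip matrix `σy ⊗ σy` (Kronecker product). -/
noncomputable def sigYY : Matrix (Fin 2 × Fin 2) (Fin 2 × Fin 2) ℂ := pauliY ⊗ₖ pauliY

/-- The spin-flipped matrix `ρ̃ = (σy⊗σy) ρ* (σy⊗σy)`, with `ρ*` the entrywise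
complex conjugate of `ρ`. -/
noncomputable def spinFlip (ρ : Matrix (Fin 2 × Fin 2) (Fin 2 × Fin 2) ℂ) :
    Matrix (Fin 2 × Fin 2) (Fin 2 × Fin 2) ℂ :=
  sigYY * ρ.map (starRingEnd ℂ) * sigYY

/-- The harmony `H(ρ) = max{0, 2 tr[(ρρ̃)²] − (tr(ρρ̃))² − 8 det ρ}` (for a density
matrix `ρ` all the quantities involved are real, so we take real parts). -/
noncomputable def harmony (ρ : Matrix (Fin 2 × Fin 2) (Fin 2 × Fin 2) ℂ) : ℝ :=
  max 0 (2 * ((ρ * spinFlip ρ * (ρ * spinFlip ρ)).trace).re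
    - ((ρ * spinFlip ρ).trace.re) ^ 2 - 8 * ρ.det.re)


section

variable {m n : Type*} [Fintype m] [Fintype n]

theorem trace_mul_mul_self_comm {R : Type*} [CommSemiring R] (A : Matrix m n R)
    (X : Matrix n m R) : trace (A * X * (A * X)) = trace (X * A * (X * A)) := by
  rw [Matrix.mul_assoc, trace_mul_comm A]
  simp only [Matrix.mul_assoc]

theorem det_mul_eq_zero_of_card_lt [DecidableEq m] {K : Type*} [Field K] (A : Matrix m n K)
    (B : Matrix n m K) (h : Fintype.card n < Fintype.card m) : det (A * B) = 0 := by
  by_contra hdet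
  have hrank := rank_of_isUnit (A * B) ((isUnit_iff_isUnit_det _).2 (isUnit_iff_ne_zero.2 hdet))
  have := (rank_mul_le_left A B).trans (rank_le_card_width A)
  omega

theorem trace_mul_conjTranspose_eq_ofReal (K : Matrix m n ℂ) :
    trace (K * Kᴴ) = ((trace (K * Kᴴ)).re : ℂ) := by
  obtain ⟨-, him⟩ := Complex.nonneg_iff.1 (posSemidef_self_mul_conjTranspose K).trace_nonneg
  exact Complex.ext rfl (by simpa using him.symm)

theorem re_trace_mul_conjTranspose (K : Matrix m n ℂ) :
    (trace (K * Kᴴ)).re = ∑ i, ∑ j, Complex.normSq (K i j) := by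
  simp [trace, mul_apply, Complex.mul_conj, Complex.re_sum]

end

theorem trace_mul_self_fin_two {R : Type*} [CommRing R] (M : Matrix (Fin 2) (Fin 2) R) :
    trace (M * M) = trace M ^ 2 - 2 * det M := by
  simp only [trace_fin_two, det_fin_two, mul_apply, Fin.sum_univ_two]
  ring

theorem Matrix.IsHermitian.four_mul_re_det_le_re_trace_sq {M : Matrix (Fin 2) (Fin 2) ℂ}
    (hM : M.IsHermitian) : 4 * M.det.re ≤ M.trace.re ^ 2 := by
  have h10 : M 1 0 = star (M 0 1) := (hM.apply 1 0).symm
  have him (i : Fin 2) : (M i i).im = 0 := by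
    have := congrArg Complex.im (hM.apply i i)
    simp only [Complex.star_def, Complex.conj_im] at this
    linarith
  rw [det_fin_two, trace_fin_two, h10, Complex.star_def, Complex.mul_conj, Complex.sub_re,
    Complex.mul_re, Complex.ofReal_re, him, him, Complex.add_re]
  nlinarith [sq_nonneg ((M 0 0).re - (M 1 1).re), Complex.normSq_nonneg (M 0 1)]

theorem pauliY_conjTranspose : pauliYᴴ = pauliY := by
  ext i j
  fin_cases i <;> fin_cases j <;> simp [pauliY]

theorem sigYY_conjTranspose : sigYYᴴ = sigYY := by
  rw [sigYY, conjTranspose_kronecker, pauliY_conjTranspose]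

theorem spinFlip_mul_conjTranspose {n : Type*} [Fintype n] (A : Matrix (Fin 2 × Fin 2) n ℂ) :
    spinFlip (A * Aᴴ) =
      sigYY * A.map (starRingEnd ℂ) * (sigYY * A.map (starRingEnd ℂ))ᴴ := by
  have h1 : (A.map (starRingEnd ℂ))ᴴ = Aᵀ := by ext; simp
  have h2 : Aᴴ.map (starRingEnd ℂ) = Aᵀ := by ext; simp
  rw [spinFlip, Matrix.map_mul, conjTranspose_mul, sigYY_conjTranspose, h1, h2]
  simp only [Matrix.mul_assoc]

noncomputable def spinFlipGram (A : Matrix (Fin 2 × Fin 2) (Fin 2) ℂ) : Matrix (Fin 2) (Fin 2) ℂ :=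
  Aᴴ * (sigYY * A.map (starRingEnd ℂ))

noncomputable def spinFlipGramNormSq (A : Matrix (Fin 2 × Fin 2) (Fin 2) ℂ) : ℝ :=
  (trace (spinFlipGram A * (spinFlipGram A)ᴴ)).re

theorem spinFlipGram_apply (A : Matrix (Fin 2 × Fin 2) (Fin 2) ℂ) (k l : Fin 2) :
    spinFlipGram A k l = star (A (0, 1) k * A (1, 0) l + A (1, 0) k * A (0, 1) l
      - A (0, 0) k * A (1, 1) l - A (1, 1) k * A (0, 0) l) := by
  simp only [spinFlipGram, sigYY, pauliY, mul_apply, conjTranspose_apply, RCLike.star_def,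
    kroneckerMap_apply, of_apply, cons_val', cons_val_fin_one, map_apply, Fintype.sum_prod_type,
    Fin.sum_univ_two, cons_val_zero, cons_val_one, mul_zero, zero_mul, mul_neg, neg_mul, zero_add,
    add_zero, neg_zero, Complex.I_mul_I, neg_neg, one_mul, star_sub, star_add, star_mul']
  ring

theorem spinFlipGramNormSq_nonneg (A : Matrix (Fin 2 × Fin 2) (Fin 2) ℂ) :
    0 ≤ spinFlipGramNormSq A :=
  (Complex.nonneg_iff.1 (posSemidef_self_mul_conjTranspose _).trace_nonneg).1

theorem harmony_mul_conjTranspose (A : Matrix (Fin 2 × Fin 2) (Fin 2) ℂ) :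
    harmony (A * Aᴴ) =
      max 0 (spinFlipGramNormSq A ^ 2 - 4 * Complex.normSq (spinFlipGram A).det) := by
  set K := spinFlipGram A
  set X := K * (sigYY * A.map (starRingEnd ℂ))ᴴ
  have hAX : A * Aᴴ * spinFlip (A * Aᴴ) = A * X := by
    simp only [X, K, spinFlipGram, spinFlip_mul_conjTranspose, Matrix.mul_assoc]
  have hXA : K * Kᴴ = X * A := by
    simp only [X, K, spinFlipGram, conjTranspose_mul, conjTranspose_conjTranspose,
      Matrix.mul_assoc]
  have hdetρ : det (A * Aᴴ) = 0 := det_mul_eq_zero_of_card_lt _ _ (by simp)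
  have hdetM : det (K * Kᴴ) = Complex.normSq K.det := by
    rw [det_mul, det_conjTranspose, ← Complex.mul_conj]
    rfl
  have htrM2 : (trace (K * Kᴴ * (K * Kᴴ))).re =
      spinFlipGramNormSq A ^ 2 - 2 * Complex.normSq K.det := by
    rw [trace_mul_self_fin_two, trace_mul_conjTranspose_eq_ofReal, hdetM]
    norm_cast
  rw [harmony, hAX, trace_mul_mul_self_comm, trace_mul_comm A X, ← hXA, hdetρ, htrM2]
  congr 1
  simp only [spinFlipGramNormSq, Complex.zero_re]
  ring

theorem harmony_mul_conjTranspose_le (A : Matrix (Fin 2 × Fin 2) (Fin 2) ℂ) :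
    harmony (A * Aᴴ) ≤ spinFlipGramNormSq A ^ 2 := by
  rw [harmony_mul_conjTranspose]
  exact max_le (sq_nonneg _) (by linarith [Complex.normSq_nonneg (spinFlipGram A).det])

section

variable (ψ : Fin 2 × Fin 2 × Fin 2 → ℂ)

def coeffXY : Matrix (Fin 2 × Fin 2) (Fin 2) ℂ :=
  of fun p k => ψ (p.1, p.2, k)

def coeffXZ : Matrix (Fin 2 × Fin 2) (Fin 2) ℂ :=
  of fun p j => ψ (p.1, j, p.2)

def coeffX : Matrix (Fin 2) (Fin 2 × Fin 2) ℂ :=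
  of fun i q => ψ (i, q.1, q.2)

theorem re_trace_coeffX_mul_conjTranspose :
    (trace (coeffX ψ * (coeffX ψ)ᴴ)).re = ∑ p, Complex.normSq (ψ p) := by
  simp [re_trace_mul_conjTranspose, coeffX, Fintype.sum_prod_type]

theorem spinFlipGramNormSq_coeffXY_add_coeffXZ :
    spinFlipGramNormSq (coeffXY ψ) + spinFlipGramNormSq (coeffXZ ψ) =
      4 * (det (coeffX ψ * (coeffX ψ)ᴴ)).re := by
  simp only [spinFlipGramNormSq, re_trace_mul_conjTranspose, spinFlipGram_apply, det_fin_two,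
    Fin.sum_univ_two, coeffXY, coeffXZ, coeffX, of_apply, mul_apply, Fintype.sum_prod_type,
    conjTranspose_apply, Complex.normSq_apply, Complex.star_def, Complex.conj_re,
    Complex.conj_im, Complex.add_re, Complex.add_im, Complex.sub_re, Complex.sub_im,
    Complex.mul_re, Complex.mul_im]
  ring

theorem harmony_coeffXY_add_harmony_coeffXZ_le :
    harmony (coeffXY ψ * (coeffXY ψ)ᴴ) + harmony (coeffXZ ψ * (coeffXZ ψ)ᴴ) ≤
      (4 * (det (coeffX ψ * (coeffX ψ)ᴴ)).re) ^ 2 := by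
  have hXY := spinFlipGramNormSq_nonneg (coeffXY ψ)
  have hXZ := spinFlipGramNormSq_nonneg (coeffXZ ψ)
  calc _ ≤ spinFlipGramNormSq (coeffXY ψ) ^ 2 + spinFlipGramNormSq (coeffXZ ψ) ^ 2 :=
        add_le_add (harmony_mul_conjTranspose_le _) (harmony_mul_conjTranspose_le _)
    _ ≤ (spinFlipGramNormSq (coeffXY ψ) + spinFlipGramNormSq (coeffXZ ψ)) ^ 2 := by nlinarith
    _ = _ := by rw [spinFlipGramNormSq_coeffXY_add_coeffXZ]

end

/-- For a pure 3-qubit state `ψ` with 2-qubit reduced density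
matrices `ρ_XY` and `ρ_XZ`: if `H(ρ_XY) = 1` then `H(ρ_XZ) = 0`, and vice versa. -/
theorem harmony_one_forces_zero (ψ : Fin 2 × Fin 2 × Fin 2 → ℂ)
    (hψ : ∑ p, Complex.normSq (ψ p) = 1)
    (ρXY : Matrix (Fin 2 × Fin 2) (Fin 2 × Fin 2) ℂ)
    (hρXY : ρXY = Matrix.of fun p q => ∑ k, ψ (p.1, p.2, k) * star (ψ (q.1, q.2, k)))
    (ρXZ : Matrix (Fin 2 × Fin 2) (Fin 2 × Fin 2) ℂ)
    (hρXZ : ρXZ = Matrix.of fun p q => ∑ j, ψ (p.1, j, p.2) * star (ψ (q.1, j, q.2)))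
    (ρX : Matrix (Fin 2) (Fin 2) ℂ)
    (hρX : ρX = Matrix.of fun i i' => ∑ j, ∑ k, ψ (i, j, k) * star (ψ (i', j, k))) :
    (harmony ρXY = 1 → harmony ρXZ = 0) ∧ (harmony ρXZ = 1 → harmony ρXY = 0) := by
  have eXY : ρXY = coeffXY ψ * (coeffXY ψ)ᴴ := by ext; simp [hρXY, coeffXY, mul_apply]
  have eXZ : ρXZ = coeffXZ ψ * (coeffXZ ψ)ᴴ := by ext; simp [hρXZ, coeffXZ, mul_apply]
  have eX : ρX = coeffX ψ * (coeffX ψ)ᴴ := by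
    ext; simp [hρX, coeffX, mul_apply, Fintype.sum_prod_type]
  have hρX_psd : ρX.PosSemidef := eX ▸ posSemidef_self_mul_conjTranspose _
  have hdet_le : 4 * ρX.det.re ≤ 1 := by
    simpa [eX, re_trace_coeffX_mul_conjTranspose, hψ] using
      hρX_psd.isHermitian.four_mul_re_det_le_re_trace_sq
  have hdet_nonneg : 0 ≤ ρX.det.re := (Complex.nonneg_iff.1 hρX_psd.det_nonneg).1
  have hmono : harmony ρXY + harmony ρXZ ≤ (4 * ρX.det.re) ^ 2 := by
    rw [eXY, eXZ, eX]
    exact harmony_coeffXY_add_harmony_coeffXZ_le ψ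
  have hsq_le : (4 * ρX.det.re) ^ 2 ≤ 1 := pow_le_one₀ (by positivity) hdet_le
  have hXY : 0 ≤ harmony ρXY := le_max_left _ _
  have hXZ : 0 ≤ harmony ρXZ := le_max_left _ _
  constructor <;> intro h <;> linarith
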